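/- arXiv:math/0307030 — 2 statements merged into one kernel-verified Lean document; each statement's English description precedes it below -/
import Mathlib

section
/- Minimum principle consequence: let f: [a,b] → ℝ be C^1 with f' never zero on (a,b) (so f is a diffeomorphism onto its image), with negative Schwarzian derivative. Then for any x ∈ (a,b), |Df(x)| ≥ min{ |f(b)-f(x)|/|b-x|, |f(x)-f(a)|/|x-a| }. -/
open Set

/-- Minimum principle for maps with negative Schwarzian derivative: if `f` is `C³` on
`[a,b]` with nonvanishing derivative on `(a,b)` and negative Schwarzian derivative,
then for every `x ∈ (a,b)`,
`|Df(x)| ≥ min { |f(b)-f(x)|/|b-x| , |f(x)-f(a)|/|x-a| }`. -/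
theorem stmt_6 (f : ℝ → ℝ) (a b : ℝ) (hab : a < b)
    (hf : ContDiffOn ℝ 3 f (Icc a b))
    (hder : ∀ y ∈ Ioo a b, deriv f y ≠ 0)
    (hSchwarz : ∀ y ∈ Ioo a b,
      deriv (deriv (deriv f)) y / deriv f y
        - (3 / 2) * (deriv (deriv f) y / deriv f y) ^ 2 < 0) :
    ∀ x ∈ Ioo a b,
      min (|f b - f x| / |b - x|) (|f x - f a| / |x - a|) ≤ |deriv f x| := by
  intro x hx
  by_contra hlt
  push_neg at hlt
  rw [lt_min_iff] at hlt
  obtain ⟨hax, hxb⟩ := hx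
  have hIopen : IsOpen (Ioo a b) := isOpen_Ioo
  have hfI : ContDiffOn ℝ 3 f (Ioo a b) := hf.mono Ioo_subset_Icc_self
  have h1 : ContDiffOn ℝ 2 (deriv f) (Ioo a b) :=
    hfI.deriv_of_isOpen hIopen (by norm_num)
  have h2 : ContDiffOn ℝ 1 (deriv (deriv f)) (Ioo a b) :=
    h1.deriv_of_isOpen hIopen (by norm_num)
  have hd0 : ∀ y ∈ Ioo a b, HasDerivAt f (deriv f y) y := fun y hy =>
    ((hfI.differentiableOn (by norm_num)).differentiableAt (hIopen.mem_nhds hy)).hasDerivAt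
  have hd1 : ∀ y ∈ Ioo a b, HasDerivAt (deriv f) (deriv (deriv f) y) y := fun y hy =>
    ((h1.differentiableOn (by norm_num)).differentiableAt (hIopen.mem_nhds hy)).hasDerivAt
  have hd2 : ∀ y ∈ Ioo a b, HasDerivAt (deriv (deriv f)) (deriv (deriv (deriv f)) y) y :=
    fun y hy =>
    ((h2.differentiableOn (by norm_num)).differentiableAt (hIopen.mem_nhds hy)).hasDerivAt
  -- MVT on [x, b] and [a, x]
  obtain ⟨ξ₁, hξ₁, hs1⟩ := exists_hasDerivAt_eq_slope f (deriv f) hxb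
      (hf.continuousOn.mono (Icc_subset_Icc hax.le le_rfl))
      (fun y hy => hd0 y ⟨hax.trans hy.1, hy.2⟩)
  obtain ⟨ξ₂, hξ₂, hs2⟩ := exists_hasDerivAt_eq_slope f (deriv f) hax
      (hf.continuousOn.mono (Icc_subset_Icc le_rfl hxb.le))
      (fun y hy => hd0 y ⟨hy.1, hy.2.trans hxb⟩)
  have hξ₁y : ξ₁ ∈ Ioo a b := ⟨hax.trans hξ₁.1, hξ₁.2⟩
  have hξ₂y : ξ₂ ∈ Ioo a b := ⟨hξ₂.1, hξ₂.2.trans hxb⟩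
  have habs1 : |deriv f x| < |deriv f ξ₁| := by
    rw [hs1, abs_div]; exact hlt.1
  have habs2 : |deriv f x| < |deriv f ξ₂| := by
    rw [hs2, abs_div]; exact hlt.2
  set g : ℝ → ℝ := fun y => deriv f y * deriv f y with hg
  have hgx1 : g x < g ξ₁ := by
    have := mul_self_lt_mul_self (abs_nonneg (deriv f x)) habs1
    rwa [abs_mul_abs_self, abs_mul_abs_self] at this
  have hgx2 : g x < g ξ₂ := by
    have := mul_self_lt_mul_self (abs_nonneg (deriv f x)) habs2
    rwa [abs_mul_abs_self, abs_mul_abs_self] at this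
  have hξ21 : ξ₂ < ξ₁ := hξ₂.2.trans hξ₁.1
  have hIccsub : Icc ξ₂ ξ₁ ⊆ Ioo a b := fun y hy => ⟨hξ₂.1.trans_le hy.1, hy.2.trans_lt hξ₁.2⟩
  have hgcont : ContinuousOn g (Icc ξ₂ ξ₁) :=
    ((h1.continuousOn).mono hIccsub).mul ((h1.continuousOn).mono hIccsub)
  obtain ⟨c, hcmem, hcmin⟩ := isCompact_Icc.exists_isMinOn (nonempty_Icc.2 hξ21.le) hgcont
  have hxmem : x ∈ Icc ξ₂ ξ₁ := ⟨hξ₂.2.le, hξ₁.1.le⟩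
  have hc1 : c ≠ ξ₁ := by
    rintro rfl; exact absurd (hcmin hxmem) (not_le.2 hgx1)
  have hc2 : c ≠ ξ₂ := by
    rintro rfl; exact absurd (hcmin hxmem) (not_le.2 hgx2)
  have hcIoo : c ∈ Ioo ξ₂ ξ₁ := ⟨hcmem.1.lt_of_ne (Ne.symm hc2), hcmem.2.lt_of_ne hc1⟩
  have hcI : c ∈ Ioo a b := hIccsub hcmem
  set G' : ℝ → ℝ := fun y => deriv (deriv f) y * deriv f y + deriv f y * deriv (deriv f) y
    with hG'def
  have hG' : ∀ y ∈ Ioo a b, HasDerivAt g (G' y) y := fun y hy =>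
    (hd1 y hy).mul (hd1 y hy)
  -- first derivative of g vanishes at c
  have hloc : IsLocalMin g c := hcmin.isLocalMin (Icc_mem_nhds hcIoo.1 hcIoo.2)
  have hG'c0 : G' c = 0 := hloc.hasDerivAt_eq_zero (hG' c hcI)
  have hd2c : deriv (deriv f) c = 0 := by
    have h := hG'c0
    rw [hG'def] at h
    simp only at h
    have : 2 * (deriv (deriv f) c * deriv f c) = 0 := by linarith [h]
    have h2 : deriv (deriv f) c * deriv f c = 0 := by linarith
    rcases mul_eq_zero.1 h2 with h | h
    · exact h
    · exact absurd h (hder c hcI)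
  -- Schwarzian gives negative second derivative of g at c
  have hS := hSchwarz c hcI
  rw [hd2c] at hS
  simp only [zero_div, ne_eq, zero_pow, mul_zero, sub_zero] at hS
  have hSneg : deriv (deriv (deriv f)) c / deriv f c < 0 := by
    simpa using hS
  have hmulneg : deriv f c * deriv (deriv (deriv f)) c < 0 := by
    have hne := hder c hcI
    have heq : deriv f c * deriv (deriv (deriv f)) c =
        (deriv f c)^2 * (deriv (deriv (deriv f)) c / deriv f c) := by
      field_simp
    rw [heq]
    exact mul_neg_of_pos_of_neg (by positivity) hSneg
  -- second derivative of g at c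
  have hG'' : HasDerivAt G'
      (deriv (deriv (deriv f)) c * deriv f c + deriv (deriv f) c * deriv (deriv f) c
        + (deriv (deriv f) c * deriv (deriv f) c + deriv f c * deriv (deriv (deriv f)) c)) c :=
    ((hd2 c hcI).mul (hd1 c hcI)).add ((hd1 c hcI).mul (hd2 c hcI))
  have hKneg : (deriv (deriv (deriv f)) c * deriv f c + deriv (deriv f) c * deriv (deriv f) c
        + (deriv (deriv f) c * deriv (deriv f) c + deriv f c * deriv (deriv (deriv f)) c)) < 0 := by
    rw [hd2c]; ring_nf; nlinarith [hmulneg]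
  -- G' is positive just to the left of c
  have hslope := hasDerivAt_iff_tendsto_slope.mp hG''
  have hev : ∀ᶠ y in nhdsWithin c {c}ᶜ, slope G' c y < 0 :=
    hslope.eventually (Iio_mem_nhds hKneg)
  have hev' : ∀ᶠ y in nhdsWithin c (Iio c), slope G' c y < 0 :=
    hev.filter_mono (nhdsWithin_mono _ (fun y hy => ne_of_lt hy))
  obtain ⟨l, hl, hlsub⟩ := mem_nhdsLT_iff_exists_Ioo_subset.1 hev'
  set m : ℝ := max l ξ₂ with hm
  have hmc : m < c := max_lt hl hcIoo.1
  set p : ℝ := (m + c) / 2 with hp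
  have hmp : m < p := by simp only [hp]; linarith
  have hpc : p < c := by simp only [hp]; linarith
  have hpos : ∀ y ∈ Ioo p c, 0 < G' y := by
    intro y hy
    have hyl : y ∈ Ioo l c := ⟨(le_max_left l ξ₂).trans_lt (hmp.trans hy.1), hy.2⟩
    have hsl : slope G' c y < 0 := hlsub hyl
    rw [slope_def_field] at hsl
    -- slope = (G' y - G' c) / (y - c)
    have hyc : y - c < 0 := by linarith [hy.2]
    rw [div_neg_iff] at hsl
    rcases hsl with ⟨h1', h2'⟩ | ⟨h1', h2'⟩
    · linarith
    · rw [hG'c0] at h1'; linarith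
  have hpcsub : Icc p c ⊆ Ioo a b := by
    intro y hy
    constructor
    · have : ξ₂ ≤ m := le_max_right l ξ₂
      exact hξ₂y.1.trans_le (le_trans (by linarith [hy.1, hmp] : ξ₂ ≤ p) hy.1)
    · exact (hy.2.trans_lt hcIoo.2).trans hξ₁y.2
  have hmono : StrictMonoOn g (Icc p c) := by
    apply strictMonoOn_of_deriv_pos (convex_Icc p c)
    · exact ((h1.continuousOn).mono hpcsub).mul ((h1.continuousOn).mono hpcsub)
    · intro y hy
      rw [interior_Icc] at hy
      rw [(hG' y (hpcsub (Ioo_subset_Icc_self hy))).deriv]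
      exact hpos y hy
  have hgp : g p < g c := hmono ⟨le_refl p, hpc.le⟩ ⟨hpc.le, le_refl c⟩ hpc
  have hpmem : p ∈ Icc ξ₂ ξ₁ := by
    constructor
    · have : ξ₂ ≤ m := le_max_right l ξ₂
      linarith [hmp]
    · exact hpc.le.trans hcmem.2
  exact absurd (hcmin hpmem) (not_le.2 hgp)
end

section
/- Shadowing-time separation identity: let x have shadowing times n_1^± < n_2^± < ... (the times at which the one-sided cylinder strictly shrinks). If n_{i+1}^± - n_i^± ≥ N_0 (where N_0 ensures unambiguous closest critical point), then the separation time of the iterate satisfies s(f^{n_i^±}(x)) = n_{i+1}^± - n_i^±. -/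
open Filter Set

/-- The index of the partition element (determined by the critical set `C`)
containing `x`: the number of critical points lying strictly below `x`. -/
noncomputable def idx (C : Set ℝ) (x : ℝ) : ℕ :=
  Nat.card {c : ℝ // c ∈ C ∧ c < x}

/-- The `n`-th cylinder set of `x`. -/
def cyl (f : ℝ → ℝ) (C : Set ℝ) (x : ℝ) (n : ℕ) : Set ℝ :=
  {z : ℝ | ∀ i ≤ n, idx C (f^[i] z) = idx C (f^[i] x)}

/-- The symbolic separation time of `y` and `x`. -/
noncomputable def sep (f : ℝ → ℝ) (C : Set ℝ) (y x : ℝ) : ℕ :=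
  sInf {k : ℕ | idx C (f^[k] y) ≠ idx C (f^[k] x)}

/-- The separation time of `x` from the critical set `C`. -/
noncomputable def sepTime (f : ℝ → ℝ) (C : Set ℝ) (x : ℝ) : ℕ :=
  sSup {s : ℕ | ∃ c ∈ C, s = sep f C x c}

/-! The point `z` stays in the cylinder of `x` up to time `n₂ - 1` and leaves it at time `n₂`,
so the itineraries of `f^{n₁} x` and `f^{n₁} z` first differ at time `n₂ - n₁`. Since
`f^{n₁} z` is critical, the choice of `N₀` turns this separation time into `s(f^{n₁} x)`. -/

theorem sep_eq_of_agree_of_ne {f : ℝ → ℝ} {C : Set ℝ} {y x : ℝ} {n : ℕ}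
    (hagree : ∀ k < n, idx C (f^[k] y) = idx C (f^[k] x))
    (hne : idx C (f^[n] y) ≠ idx C (f^[n] x)) :
    sep f C y x = n :=
  IsLeast.csInf_eq ⟨hne, fun _ hk => not_lt.mp fun hlt => hk (hagree _ hlt)⟩

theorem idx_iterate_ne_of_mem_cyl_of_notMem_cyl {f : ℝ → ℝ} {C : Set ℝ} {x z : ℝ} {n : ℕ}
    (hz : z ∈ cyl f C x n) (hz' : z ∉ cyl f C x (n + 1)) :
    idx C (f^[n + 1] z) ≠ idx C (f^[n + 1] x) := fun heq =>
  hz' fun i hi => by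
    rcases hi.lt_or_eq with hlt | rfl
    · exact hz i (Nat.lt_succ_iff.mp hlt)
    · exact heq

theorem sep_iterate_eq_of_mem_cyl_of_notMem_cyl {f : ℝ → ℝ} {C : Set ℝ} {x z : ℝ}
    {n m : ℕ} (hm : m ≤ n) (hz : z ∈ cyl f C x n) (hz' : z ∉ cyl f C x (n + 1)) :
    sep f C (f^[m] x) (f^[m] z) = n + 1 - m := by
  apply sep_eq_of_agree_of_ne
  · intro k hk
    simp only [← Function.iterate_add_apply]
    exact (hz (k + m) (by omega)).symm
  · simp only [← Function.iterate_add_apply, Nat.sub_add_cancel (Nat.le_succ_of_le hm)]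
    exact (idx_iterate_ne_of_mem_cyl_of_notMem_cyl hz hz').symm

theorem stmt_17_general (f : ℝ → ℝ) (C : Set ℝ) (x z w : ℝ) (n₁ n₂ N₀ : ℕ)
    (hn : n₁ < n₂) (hxz : x < z) (hwz : x ≤ w ∧ w < z)
    (hCz : f^[n₁] z ∈ C)
    (hcylconst : ∀ m : ℕ, n₁ ≤ m → m < n₂ → cyl f C x m ∩ Set.Ici x = Set.Icc x z)
    (hcyl2 : cyl f C x n₂ ∩ Set.Ici x = Set.Icc x w)
    (hN₀ : ∀ u : ℝ, ∀ c ∈ C, N₀ ≤ sep f C u c → sepTime f C u = sep f C u c) :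
    sep f C (f^[n₁] x) (f^[n₁] z) = n₂ - n₁ ∧
    (N₀ ≤ n₂ - n₁ → sepTime f C (f^[n₁] x) = n₂ - n₁) := by
  obtain ⟨n, rfl⟩ : ∃ n, n₂ = n + 1 := ⟨n₂ - 1, by omega⟩
  have hz : z ∈ cyl f C x n := by
    have hz : z ∈ cyl f C x n ∩ Ici x := by
      rw [hcylconst n (by omega) n.lt_succ_self]
      exact ⟨hxz.le, le_rfl⟩
    exact hz.1
  have hz' : z ∉ cyl f C x (n + 1) := fun h => by
    have hz : z ∈ cyl f C x (n + 1) ∩ Ici x := ⟨h, hxz.le⟩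
    rw [hcyl2] at hz
    exact hwz.2.not_ge hz.2
  have hsep := sep_iterate_eq_of_mem_cyl_of_notMem_cyl (m := n₁) (by omega) hz hz'
  exact ⟨hsep, fun hN => (hN₀ _ _ hCz (hsep ▸ hN)).trans hsep⟩

/-- Shadowing-time separation identity: let `n₁ < n₂` be successive (right)
shadowing times of `x`, so that the right part of the `m`-th cylinder of `x` equals
`[x, z]` for `n₁ ≤ m < n₂` and shrinks to `[x, w]` at time `n₂`, with
`f^{n₁}(z) = c̃ ∈ C`, `f^{n₂}(w) ∈ C` and `f^{n₂}` monotone on `[x, z]`. Then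
`s(f^{n₁}(x), c̃) = n₂ - n₁`, and if `n₂ - n₁ ≥ N₀` (where `N₀` guarantees an
unambiguous closest critical point) then `s(f^{n₁}(x)) = n₂ - n₁`. -/
theorem stmt_17 (f : ℝ → ℝ) (C : Set ℝ) (x z w : ℝ) (n₁ n₂ N₀ : ℕ)
    (hn : n₁ < n₂) (hxz : x < z) (hwz : x ≤ w ∧ w < z)
    (hCz : f^[n₁] z ∈ C) (hCw : f^[n₂] w ∈ C)
    (hcylconst : ∀ m : ℕ, n₁ ≤ m → m < n₂ → cyl f C x m ∩ Set.Ici x = Set.Icc x z)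
    (hcyl2 : cyl f C x n₂ ∩ Set.Ici x = Set.Icc x w)
    (hmono : StrictMonoOn (f^[n₂]) (Set.Icc x z) ∨ StrictAntiOn (f^[n₂]) (Set.Icc x z))
    (hN₀ : ∀ u : ℝ, ∀ c ∈ C, N₀ ≤ sep f C u c → sepTime f C u = sep f C u c) :
    sep f C (f^[n₁] x) (f^[n₁] z) = n₂ - n₁ ∧
    (N₀ ≤ n₂ - n₁ → sepTime f C (f^[n₁] x) = n₂ - n₁) :=
  stmt_17_general f C x z w n₁ n₂ N₀ hn hxz hwz hCz hcylconst hcyl2 hN₀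
end
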